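/- arXiv:2306.16571 — 4 statements merged into one kernel-verified Lean document; each statement's English description precedes it below -/
import Mathlib

section
/- For every t ∈ (0, τ], the identity ∫_(0,t] (1/K(u−)) dN(u) + ∫_(0, X∧t] N(u) d(1/K)(u) = N(X ∧ t)/K(X ∧ t) holds exactly, where d(1/K) denotes Lebesgue–Stieltjes integration against the function u ↦ 1/K(u). -/
open MeasureTheory Set

/-- Lebesgue–Stieltjes integral of `f` over `s` against the signed measure `μp - μm`. -/
noncomputable def lsInt (μp μm : Measure ℝ) (s : Set ℝ) (f : ℝ → ℝ) : ℝ :=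
  (∫ u in s, f u ∂μp) - (∫ u in s, f u ∂μm)

/-!
Write `N(u) = ν(0,u]` and `1/K(u) = 1 + ρ(0,u]` with the signed measures `ν = νp - νm`,
`ρ = ρp - ρm`; by continuity of measure from below, `1/K(u-) = 1 + ρ(0,u)`. Splitting the
square `(0,T]²` along the diagonal and applying Fubini gives
`∫_(0,T] ρ(0,u) dν(u) + ∫_(0,T] ν(0,u] dρ(u) = ν(0,T] ρ(0,T]`, which is the integration by
parts formula at `T = X ∧ t`. Finally, since `N` is stopped at `X`, `ν` vanishes on `(X ∧ t, t]`, so the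
`dN` integral over `(0,t]` equals the one over `(0, X ∧ t]`.
-/

open Filter Topology

namespace MeasureTheory

lemma lintegral_measure_Iic_add_lintegral_measure_Iio (μ ν : Measure ℝ) [SFinite μ]
    [SFinite ν] : ∫⁻ u, ν (Iic u) ∂μ + ∫⁻ v, μ (Iio v) ∂ν = μ univ * ν univ := by
  have hle : MeasurableSet {p : ℝ × ℝ | p.2 ≤ p.1} :=
    measurableSet_le measurable_snd measurable_fst
  have hcompl : {p : ℝ × ℝ | p.2 ≤ p.1}ᶜ = {p | p.1 < p.2} := by ext; simp
  rw [← Measure.prod_prod, univ_prod_univ, ← measure_add_measure_compl hle, hcompl,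
    Measure.prod_apply hle, Measure.prod_apply_symm (hcompl ▸ hle.compl)]
  rfl

lemma integral_measureReal_Iic_add_integral_measureReal_Iio (μ ν : Measure ℝ)
    [IsFiniteMeasure μ] [IsFiniteMeasure ν] :
    ∫ u, ν.real (Iic u) ∂μ + ∫ v, μ.real (Iio v) ∂ν = μ.real univ * ν.real univ := by
  have key := lintegral_measure_Iic_add_lintegral_measure_Iio μ ν
  have hfin := ENNReal.add_ne_top.1 (key ▸ ENNReal.mul_ne_top (measure_ne_top μ univ)
    (measure_ne_top ν univ))
  have hIic : Monotone fun u ↦ ν (Iic u) := fun _ _ h ↦ measure_mono (Iic_subset_Iic.2 h)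
  have hIio : Monotone fun v ↦ μ (Iio v) := fun _ _ h ↦ measure_mono (Iio_subset_Iio h)
  simp only [measureReal_def]
  rw [integral_toReal hIic.measurable.aemeasurable
      (.of_forall fun _ ↦ measure_lt_top ν _),
    integral_toReal hIio.measurable.aemeasurable
      (.of_forall fun _ ↦ measure_lt_top μ _),
    ← ENNReal.toReal_add hfin.1 hfin.2, key, ENNReal.toReal_mul]

lemma integral_measureReal_Ioc_add_integral_measureReal_Ioo (μ ν : Measure ℝ)
    [IsFiniteMeasure μ] [IsFiniteMeasure ν] (a b : ℝ) :
    ∫ u in Ioc a b, ν.real (Ioc a u) ∂μ + ∫ v in Ioc a b, μ.real (Ioo a v) ∂ν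
      = μ.real (Ioc a b) * ν.real (Ioc a b) := by
  have key := integral_measureReal_Iic_add_integral_measureReal_Iio
    (μ.restrict (Ioc a b)) (ν.restrict (Ioc a b))
  rw [measureReal_restrict_apply_univ, measureReal_restrict_apply_univ] at key
  rw [← key]
  congr 1 <;> refine setIntegral_congr_fun measurableSet_Ioc fun u hu ↦ ?_ <;>
    rw [measureReal_restrict_apply (by measurability)]
  · rw [Iic_inter_Ioc_of_le hu.2]
  · congr 1; ext x; simp only [mem_inter_iff, mem_Iio, mem_Ioc, mem_Ioo]; grind

lemma tendsto_measure_Ioc_nhdsLT (ρ : Measure ℝ) (a u : ℝ) :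
    Tendsto (fun v ↦ ρ (Ioc a v)) (𝓝[<] u) (𝓝 (ρ (Ioo a u))) := by
  have hmono : Monotone fun v ↦ ρ (Ioc a v) := fun _ _ h ↦ measure_mono (Ioc_subset_Ioc_right h)
  obtain ⟨s, hs_mono, hs_mem, hs_lim⟩ := exists_seq_strictMono_tendsto' (sub_one_lt u)
  have hs : Tendsto s atTop (𝓝[<] u) :=
    tendsto_nhdsWithin_iff.2 ⟨hs_lim, .of_forall fun n ↦ (hs_mem n).2⟩
  have hunion : ⋃ n, Ioc a (s n) = Ioo a u := by
    ext x
    simp only [mem_iUnion, mem_Ioc, mem_Ioo]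
    refine ⟨fun ⟨n, hax, hxs⟩ ↦ ⟨hax, hxs.trans_lt (hs_mem n).2⟩, fun ⟨hax, hxu⟩ ↦ ?_⟩
    obtain ⟨n, hn⟩ := (hs_lim.eventually (lt_mem_nhds hxu)).exists
    exact ⟨n, hax, hn.le⟩
  have hseq := tendsto_measure_iUnion_atTop (μ := ρ) (s := fun n ↦ Ioc a (s n))
    fun _ _ h ↦ Ioc_subset_Ioc_right (hs_mono.monotone h)
  rw [hunion] at hseq
  rw [tendsto_nhds_unique hseq ((hmono.tendsto_nhdsLT u).comp hs)]
  exact hmono.tendsto_nhdsLT u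

lemma integrable_measureReal_of_monotone (μ ρ : Measure ℝ) [IsFiniteMeasure μ]
    [IsFiniteMeasure ρ] {s : ℝ → Set ℝ} (hs : Monotone s) :
    Integrable (fun u ↦ ρ.real (s u)) μ :=
  .of_mem_Icc 0 (ρ.real univ)
    (Monotone.measurable fun _ _ h ↦ measureReal_mono (hs h)).aemeasurable
    (.of_forall fun _ ↦ ⟨measureReal_nonneg, measureReal_mono (subset_univ _)⟩)

section FiniteMeasures

variable {μ ρp ρm : Measure ℝ} [IsFiniteMeasure μ] [IsFiniteMeasure ρp] [IsFiniteMeasure ρm]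

lemma tendsto_nhdsLT_of_sub_eq_measureReal {G : ℝ → ℝ} {a u : ℝ} (hau : a < u)
    (hG : ∀ v ∈ Ioo a u, G v - G a = ρp.real (Ioc a v) - ρm.real (Ioc a v)) :
    Tendsto G (𝓝[<] u) (𝓝 (G a + ρp.real (Ioo a u) - ρm.real (Ioo a u))) := by
  have hreal (ρ : Measure ℝ) [IsFiniteMeasure ρ] :
      Tendsto (fun v ↦ ρ.real (Ioc a v)) (𝓝[<] u) (𝓝 (ρ.real (Ioo a u))) :=
    (ENNReal.tendsto_toReal (measure_ne_top ρ _)).comp (tendsto_measure_Ioc_nhdsLT ρ a u)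
  refine ((tendsto_const_nhds.add (hreal ρp)).sub (hreal ρm)).congr' ?_
  filter_upwards [Ioo_mem_nhdsLT hau] with v hv
  linarith [hG v hv]

lemma one_div_eq_of_tendsto_nhdsLT {K : ℝ → ℝ} {k a u : ℝ} (hau : a < u)
    (hK : Tendsto K (𝓝[<] u) (𝓝 k)) (hne : ∀ v ∈ Ioo a u, K v ≠ 0)
    (hrep : ∀ v ∈ Ioo a u, 1 / K v - 1 / K a = ρp.real (Ioc a v) - ρm.real (Ioc a v)) :
    1 / k = 1 / K a + ρp.real (Ioo a u) - ρm.real (Ioo a u) := by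
  have hlim := tendsto_nhdsLT_of_sub_eq_measureReal (G := fun v ↦ 1 / K v) hau hrep
  refine (eq_one_div_of_mul_eq_one_right <| tendsto_nhds_unique (hK.mul hlim) ?_).symm
  refine tendsto_const_nhds.congr' ?_
  filter_upwards [Ioo_mem_nhdsLT hau] with v hv using (mul_one_div_cancel (hne v hv)).symm

variable {s : ℝ → Set ℝ} {S : Set ℝ} {g : ℝ → ℝ} {c : ℝ}

lemma integrableOn_of_eq_add_measureReal (hs : Monotone s) (hS : MeasurableSet S)
    (hg : ∀ u ∈ S, g u = c + ρp.real (s u) - ρm.real (s u)) : IntegrableOn g S μ :=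
  IntegrableOn.congr_fun
    (((integrable_const c).add (integrable_measureReal_of_monotone _ ρp hs)).sub
      (integrable_measureReal_of_monotone _ ρm hs))
    (fun u hu ↦ (hg u hu).symm) hS

lemma setIntegral_eq_add_measureReal (hs : Monotone s) (hS : MeasurableSet S)
    (hg : ∀ u ∈ S, g u = c + ρp.real (s u) - ρm.real (s u)) :
    ∫ u in S, g u ∂μ
      = μ.real S * c + ∫ u in S, ρp.real (s u) ∂μ - ∫ u in S, ρm.real (s u) ∂μ := by
  rw [setIntegral_congr_fun hS hg, integral_sub _ (integrable_measureReal_of_monotone _ ρm hs),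
    integral_add (integrable_const c) (integrable_measureReal_of_monotone _ ρp hs),
    setIntegral_const, smul_eq_mul]
  exact (integrable_const c).add (integrable_measureReal_of_monotone _ ρp hs)

end FiniteMeasures

lemma restrict_Ioc_eq_of_measureReal_Ioc_eq {μ ν : Measure ℝ} [IsFiniteMeasure μ]
    [IsFiniteMeasure ν] {b c : ℝ}
    (h : ∀ x y, b ≤ x → x ≤ y → y ≤ c → μ.real (Ioc x y) = ν.real (Ioc x y)) :
    μ.restrict (Ioc b c) = ν.restrict (Ioc b c) := by
  have h' : ∀ x y, b ≤ x → y ≤ c → μ (Ioc x y) = ν (Ioc x y) := by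
    intro x y hbx hyc
    rcases le_or_gt x y with hxy | hyx
    · exact (ENNReal.toReal_eq_toReal_iff' (measure_ne_top _ _) (measure_ne_top _ _)).1
        (h x y hbx hxy hyc)
    · simp [Ioc_eq_empty_of_le hyx.le]
  refine Measure.ext_of_Ioc_finite _ _ ?_ fun x y _ ↦ ?_
  · simpa only [Measure.restrict_apply_univ] using h' b c le_rfl le_rfl
  · simpa only [Measure.restrict_apply measurableSet_Ioc, Ioc_inter_Ioc] using
      h' _ _ (le_max_right x b) (min_le_right y c)

end MeasureTheory

open MeasureTheory

lemma lsInt_Ioc_eq_of_restrict_eq {μp μm : Measure ℝ} {g : ℝ → ℝ} {a b c : ℝ} (hab : a ≤ b)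
    (hbc : b ≤ c) (hp : IntegrableOn g (Ioc a c) μp) (hm : IntegrableOn g (Ioc a c) μm)
    (h : μp.restrict (Ioc b c) = μm.restrict (Ioc b c)) :
    lsInt μp μm (Ioc a c) g = lsInt μp μm (Ioc a b) g := by
  have hsplit := (Ioc_union_Ioc_eq_Ioc hab hbc).symm
  have hdisj : Disjoint (Ioc a b) (Ioc b c) := Ioc_disjoint_Ioc_of_le le_rfl
  have hsub₁ : Ioc a b ⊆ Ioc a c := Ioc_subset_Ioc_right hbc
  have hsub₂ : Ioc b c ⊆ Ioc a c := Ioc_subset_Ioc_left hab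
  unfold lsInt
  rw [hsplit, setIntegral_union hdisj measurableSet_Ioc (hp.mono_set hsub₁) (hp.mono_set hsub₂),
    setIntegral_union hdisj measurableSet_Ioc (hm.mono_set hsub₁) (hm.mono_set hsub₂), h]
  ring

lemma lsInt_add_lsInt_eq_sub_mul {νp νm ρp ρm : Measure ℝ} [IsFiniteMeasure νp]
    [IsFiniteMeasure νm] [IsFiniteMeasure ρp] [IsFiniteMeasure ρm] {F G Gl : ℝ → ℝ} {a b : ℝ}
    (hab : a ≤ b) (hF : ∀ u ∈ Icc a b, F u - F a = νp.real (Ioc a u) - νm.real (Ioc a u))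
    (hG : G b - G a = ρp.real (Ioc a b) - ρm.real (Ioc a b))
    (hGl : ∀ u ∈ Ioc a b, Gl u = G a + ρp.real (Ioo a u) - ρm.real (Ioo a u)) :
    lsInt νp νm (Ioc a b) Gl + lsInt ρp ρm (Ioc a b) F = F b * G b - F a * G a := by
  have hFI : ∀ u ∈ Ioc a b, F u = F a + νp.real (Ioc a u) - νm.real (Ioc a u) := fun u hu ↦ by
    linarith [hF u (Ioc_subset_Icc_self hu)]
  have hFb := hF b ⟨hab, le_rfl⟩
  have hIoo : Monotone (Ioo a) := fun _ _ h ↦ Ioo_subset_Ioo_right h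
  have hIoc : Monotone (Ioc a) := fun _ _ h ↦ Ioc_subset_Ioc_right h
  unfold lsInt
  rw [setIntegral_eq_add_measureReal hIoo measurableSet_Ioc hGl,
    setIntegral_eq_add_measureReal hIoo measurableSet_Ioc hGl,
    setIntegral_eq_add_measureReal hIoc measurableSet_Ioc hFI,
    setIntegral_eq_add_measureReal hIoc measurableSet_Ioc hFI]
  linear_combination integral_measureReal_Ioc_add_integral_measureReal_Ioo ρp νp a b
    - integral_measureReal_Ioc_add_integral_measureReal_Ioo ρm νp a b
    - integral_measureReal_Ioc_add_integral_measureReal_Ioo ρp νm a b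
    + integral_measureReal_Ioc_add_integral_measureReal_Ioo ρm νm a b
    - G b * hFb - (F a + νp.real (Ioc a b) - νm.real (Ioc a b)) * hG

theorem stmt_5_general
    (τ X : ℝ) (K Kl N : ℝ → ℝ) (νp νm ρp ρm : Measure ℝ)
    [IsFiniteMeasure νp] [IsFiniteMeasure νm] [IsFiniteMeasure ρp] [IsFiniteMeasure ρm]
    (hX : X ∈ Ioc 0 τ)
    (hK0 : K 0 = 1) (hKne : ∀ u ∈ Ioc (0 : ℝ) τ, K u ≠ 0)
    (hKl : ∀ u ∈ Ioc (0 : ℝ) τ,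
      Filter.Tendsto K (nhdsWithin u (Iio u)) (nhds (Kl u)))
    -- `ρp - ρm` is the Lebesgue–Stieltjes measure of `u ↦ 1/K(u)` on `[0, τ]`
    (hKinvrep : ∀ s t : ℝ, 0 ≤ s → s ≤ t → t ≤ τ →
      1 / K t - 1 / K s = (ρp (Ioc s t)).toReal - (ρm (Ioc s t)).toReal)
    (hN0 : N 0 = 0) (hNstop : ∀ u : ℝ, 0 ≤ u → N u = N (min u X))
    (hNrep : ∀ s t : ℝ, 0 ≤ s → s ≤ t → t ≤ τ →
      N t - N s = (νp (Ioc s t)).toReal - (νm (Ioc s t)).toReal) :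
    ∀ t ∈ Ioc (0 : ℝ) τ,
      lsInt νp νm (Ioc 0 t) (fun u => 1 / Kl u)
        + lsInt ρp ρm (Ioc 0 (min X t)) (fun u => N u)
        = N (min X t) / K (min X t) := by
  intro t ht
  set T := min X t
  have hT0 : 0 < T := lt_min hX.1 ht.1
  have hTt : T ≤ t := min_le_right X t
  have hKl_eq : ∀ u ∈ Ioc (0 : ℝ) τ, 1 / Kl u = 1 + ρp.real (Ioo 0 u) - ρm.real (Ioo 0 u) :=
    fun u hu ↦ by
      rw [one_div_eq_of_tendsto_nhdsLT hu.1 (hKl u hu)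
        (fun v hv ↦ hKne v ⟨hv.1, hv.2.le.trans hu.2⟩)
        (fun v hv ↦ hKinvrep 0 v le_rfl hv.1.le (hv.2.le.trans hu.2)), hK0, div_one]
  have hKl_int (μ : Measure ℝ) [IsFiniteMeasure μ] : IntegrableOn (fun u ↦ 1 / Kl u) (Ioc 0 t) μ :=
    integrableOn_of_eq_add_measureReal (fun _ _ h ↦ Ioo_subset_Ioo_right h) measurableSet_Ioc
      fun u hu ↦ hKl_eq u ⟨hu.1, hu.2.trans ht.2⟩
  have hN_const : ∀ u ∈ Icc T t, N u = N T := fun u hu ↦ by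
    rw [hNstop u (hT0.le.trans hu.1), show min u X = T by grind]
  have hν : νp.restrict (Ioc T t) = νm.restrict (Ioc T t) :=
    restrict_Ioc_eq_of_measureReal_Ioc_eq fun x y hTx hxy hyt ↦ by
      have := hNrep x y (hT0.le.trans hTx) hxy (hyt.trans ht.2)
      rw [hN_const x ⟨hTx, hxy.trans hyt⟩, hN_const y ⟨hTx.trans hxy, hyt⟩] at this
      simp only [measureReal_def]
      linarith
  rw [lsInt_Ioc_eq_of_restrict_eq hT0.le hTt (hKl_int νp) (hKl_int νm) hν,
    lsInt_add_lsInt_eq_sub_mul (G := fun v ↦ 1 / K v) hT0.le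
      (fun u hu ↦ hNrep 0 u le_rfl hu.1 (hu.2.trans (hTt.trans ht.2)))
      (hKinvrep 0 T le_rfl hT0.le (hTt.trans ht.2))
      (fun u hu ↦ by rw [hK0, div_one]; exact hKl_eq u ⟨hu.1, hu.2.trans (hTt.trans ht.2)⟩),
    hN0]
  ring

/-- Fix `0 < τ < ∞` and `X ∈ (0, τ]`.  Let `K : [0,∞) → ℝ` be
right-continuous, of bounded variation on `[0, τ]`, with `K 0 = 1` and `K ≠ 0` on
`(0, τ]`; `Kl = K(·-)` is the left limit.  Let `N : [0,∞) → ℝ` be right-continuous,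
of bounded variation on `[0, τ]` (`dN = νp - νm` via `hNrep`), with `N 0 = 0` and
`N u = N (u ⊓ X)` for all `u ≥ 0`.  The reciprocal `u ↦ 1/K(u)` has Lebesgue–Stieltjes
measure `d(1/K) = ρp - ρm` (via `hKinvrep`).  Then for every `t ∈ (0, τ]`:

`∫_(0,t] (1/K(u-)) dN(u) + ∫_(0, X∧t] N(u) d(1/K)(u) = N(X ∧ t)/K(X ∧ t)`. -/
theorem stmt_5
    (τ X : ℝ) (K Kl N : ℝ → ℝ) (νp νm ρp ρm : Measure ℝ)
    [IsFiniteMeasure νp] [IsFiniteMeasure νm] [IsFiniteMeasure ρp] [IsFiniteMeasure ρm]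
    (hτ : 0 < τ) (hX : X ∈ Ioc 0 τ)
    (hK0 : K 0 = 1) (hKne : ∀ u ∈ Ioc (0 : ℝ) τ, K u ≠ 0)
    (hKl : ∀ u ∈ Ioc (0 : ℝ) τ,
      Filter.Tendsto K (nhdsWithin u (Iio u)) (nhds (Kl u)))
    -- `ρp - ρm` is the Lebesgue–Stieltjes measure of `u ↦ 1/K(u)` on `[0, τ]`
    (hKinvrep : ∀ s t : ℝ, 0 ≤ s → s ≤ t → t ≤ τ →
      1 / K t - 1 / K s = (ρp (Ioc s t)).toReal - (ρm (Ioc s t)).toReal)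
    (hN0 : N 0 = 0) (hNstop : ∀ u : ℝ, 0 ≤ u → N u = N (min u X))
    (hNrep : ∀ s t : ℝ, 0 ≤ s → s ≤ t → t ≤ τ →
      N t - N s = (νp (Ioc s t)).toReal - (νm (Ioc s t)).toReal) :
    ∀ t ∈ Ioc (0 : ℝ) τ,
      lsInt νp νm (Ioc 0 t) (fun u => 1 / Kl u)
        + lsInt ρp ρm (Ioc 0 (min X t)) (fun u => N u)
        = N (min X t) / K (min X t) :=
  stmt_5_general τ X K Kl N νp νm ρp ρm hX hK0 hKne hKl hKinvrep hN0 hNstop hNrep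
end

section
/- The censoring cumulative hazard computed from the observed data using the modified at-risk process Y† identifies the true censoring cumulative hazard: (a) for every u ∈ (0, τ], P({X > u, Δ = 1} ∪ {X ≥ u, Δ = 0}) = P(T > u)·P(C ≥ u); (b) the Lebesgue–Stieltjes measure of u ↦ P(X ≤ u, Δ = 0) on (0, τ] equals P(T > u) dF_C(u), where F_C(u) = P(C ≤ u); and consequently (c) for every t ∈ (0, τ], ∫_(0,t] dG(u)/P({X > u, Δ = 1} ∪ {X ≥ u, Δ = 0}) = ∫_(0,t] dF_C(u)/P(C ≥ u), where G(u) = P(X ≤ u, Δ = 0). -/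
open MeasureTheory Set

/-- Let `T, C` be positive failure and censoring times whose joint law
agrees with the product of the marginals on the region `{(t, c) : c < t}` (independence
"on C < T").  Set `X = min(T, C)`, `Δ = 1{T ≤ C}`, and fix `τ > 0` with `P(T > τ) > 0`
and `P(C ≥ τ) > 0`.  Then the censoring cumulative hazard computed from the observed
data with the modified at-risk process `Y†` identifies the true censoring hazard:

(a) for every `u ∈ (0, τ]`, `P({X > u, Δ = 1} ∪ {X ≥ u, Δ = 0}) = P(T > u)·P(C ≥ u)`;

(b) the Lebesgue–Stieltjes measure of `u ↦ P(X ≤ u, Δ = 0)` (namely the pushforward of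
`P` restricted to `{Δ = 0}` under `X`) satisfies, on measurable subsets `s ⊆ (0, τ]`,
`dG(s) = ∫_s P(T > u) dF_C(u)` where `F_C(u) = P(C ≤ u)` (with `dF_C` the law of `C`);

(c) consequently, for every `t ∈ (0, τ]`,
`∫_(0,t] dG(u)/P({X > u, Δ = 1} ∪ {X ≥ u, Δ = 0}) = ∫_(0,t] dF_C(u)/P(C ≥ u)`. -/
theorem stmt_11
    {Ω : Type*} [MeasurableSpace Ω] (P : Measure Ω) [IsProbabilityMeasure P]
    (T C : Ω → ℝ) (hT : Measurable T) (hC : Measurable C)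
    (hTpos : ∀ ω, 0 < T ω) (hCpos : ∀ ω, 0 < C ω)
    (τ : ℝ) (hτ : 0 < τ)
    (hTτ : 0 < P {ω | τ < T ω}) (hCτ : 0 < P {ω | τ ≤ C ω})
    -- independence of failure and censoring on the region `{c < t}`
    (hindep : (P.map (fun ω => (T ω, C ω))).restrict {p : ℝ × ℝ | p.2 < p.1}
      = ((P.map T).prod (P.map C)).restrict {p : ℝ × ℝ | p.2 < p.1}) :
    (∀ u ∈ Ioc (0 : ℝ) τ,
      (P {ω | (u < min (T ω) (C ω) ∧ T ω ≤ C ω)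
            ∨ (u ≤ min (T ω) (C ω) ∧ ¬ T ω ≤ C ω)}).toReal
        = (P {ω | u < T ω}).toReal * (P {ω | u ≤ C ω}).toReal)
    ∧ (∀ s : Set ℝ, MeasurableSet s → s ⊆ Ioc (0 : ℝ) τ →
      Measure.map (fun ω => min (T ω) (C ω)) (P.restrict {ω | ¬ T ω ≤ C ω}) s
        = ∫⁻ u in s, P {ω | u < T ω} ∂(P.map C))
    ∧ (∀ t ∈ Ioc (0 : ℝ) τ,
      ∫ u in Ioc (0 : ℝ) t,
          ((P {ω | (u < min (T ω) (C ω) ∧ T ω ≤ C ω)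
              ∨ (u ≤ min (T ω) (C ω) ∧ ¬ T ω ≤ C ω)}).toReal)⁻¹
          ∂(Measure.map (fun ω => min (T ω) (C ω)) (P.restrict {ω | ¬ T ω ≤ C ω}))
        = ∫ u in Ioc (0 : ℝ) t, ((P {ω | u ≤ C ω}).toReal)⁻¹ ∂(P.map C)) := by
  classical
  have hTC : Measurable fun ω => (T ω, C ω) := hT.prodMk hC
  have hX : Measurable fun ω => min (T ω) (C ω) := hT.min hC
  set ν : Measure (ℝ × ℝ) := P.map (fun ω => (T ω, C ω)) with hνdef
  set μT : Measure ℝ := P.map T with hμTdef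
  set μC : Measure ℝ := P.map C with hμCdef
  haveI : IsProbabilityMeasure μT := Measure.isProbabilityMeasure_map hT.aemeasurable
  haveI : IsProbabilityMeasure μC := Measure.isProbabilityMeasure_map hC.aemeasurable
  haveI : IsProbabilityMeasure ν := Measure.isProbabilityMeasure_map hTC.aemeasurable
  set R : Set (ℝ × ℝ) := {p | p.2 < p.1} with hRdef
  have hR : MeasurableSet R := measurableSet_lt measurable_snd measurable_fst
  have hOnR : ∀ A : Set (ℝ × ℝ), MeasurableSet A → ν (A ∩ R) = (μT.prod μC) (A ∩ R) := by
    intro A hA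
    have h1 := congrArg (fun m : Measure (ℝ × ℝ) => m A) hindep
    simpa [Measure.restrict_apply hA] using h1
  have hDiff : ∀ A : Set (ℝ × ℝ), MeasurableSet A → ν A = (μT.prod μC) A →
      ν (A \ R) = (μT.prod μC) (A \ R) := by
    intro A hA hAeq
    have h1 : ν (A ∩ R) + ν (A \ R) = ν (A ∩ R) + (μT.prod μC) (A \ R) := by
      rw [measure_inter_add_diff A hR, hAeq, hOnR A hA, measure_inter_add_diff A hR]
    exact (ENNReal.add_right_inj (measure_ne_top _ _)).mp h1
  have hmapT : ∀ u : ℝ, μT (Ioi u) = P {ω | u < T ω} := by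
    intro u
    rw [hμTdef, Measure.map_apply hT measurableSet_Ioi]
    rfl
  have hmapC : ∀ u : ℝ, μC (Ici u) = P {ω | u ≤ C ω} := by
    intro u
    rw [hμCdef, Measure.map_apply hC measurableSet_Ici]
    rfl
  have hkey : ∀ u : ℝ, ν (Ioi u ×ˢ Ici u) = μT (Ioi u) * μC (Ici u) := by
    intro u
    have hSm : MeasurableSet (Ioi u ×ˢ Ici u : Set (ℝ × ℝ)) :=
      measurableSet_Ioi.prod measurableSet_Ici
    have hAm : MeasurableSet (Ioi u ×ˢ (univ : Set ℝ)) :=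
      measurableSet_Ioi.prod MeasurableSet.univ
    have hAeq : ν (Ioi u ×ˢ (univ : Set ℝ)) = (μT.prod μC) (Ioi u ×ˢ (univ : Set ℝ)) := by
      rw [Measure.prod_prod, measure_univ, mul_one, hνdef, Measure.map_apply hTC hAm,
        hμTdef, Measure.map_apply hT measurableSet_Ioi]
      congr 1
      ext ω
      simp
    have hsd : (Ioi u ×ˢ Ici u) \ R = (Ioi u ×ˢ (univ : Set ℝ)) \ R := by
      ext p
      simp only [mem_diff, mem_prod, mem_Ioi, mem_Ici, mem_univ, and_true, hRdef, mem_setOf_eq]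
      constructor
      · rintro ⟨⟨h1, _⟩, h3⟩
        exact ⟨h1, h3⟩
      · rintro ⟨h1, h3⟩
        exact ⟨⟨h1, le_trans h1.le (not_lt.mp h3)⟩, h3⟩
    calc ν (Ioi u ×ˢ Ici u)
        = ν ((Ioi u ×ˢ Ici u) ∩ R) + ν ((Ioi u ×ˢ Ici u) \ R) :=
          (measure_inter_add_diff _ hR).symm
      _ = (μT.prod μC) ((Ioi u ×ˢ Ici u) ∩ R) + (μT.prod μC) ((Ioi u ×ˢ Ici u) \ R) := by
          rw [hOnR _ hSm, hsd, hDiff _ hAm hAeq]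
      _ = (μT.prod μC) (Ioi u ×ˢ Ici u) := measure_inter_add_diff _ hR
      _ = μT (Ioi u) * μC (Ici u) := Measure.prod_prod _ _
  have hEa : ∀ u : ℝ, P {ω | (u < min (T ω) (C ω) ∧ T ω ≤ C ω)
      ∨ (u ≤ min (T ω) (C ω) ∧ ¬ T ω ≤ C ω)} = μT (Ioi u) * μC (Ici u) := by
    intro u
    have hset : {ω | (u < min (T ω) (C ω) ∧ T ω ≤ C ω)
        ∨ (u ≤ min (T ω) (C ω) ∧ ¬ T ω ≤ C ω)}
        = (fun ω => (T ω, C ω)) ⁻¹' (Ioi u ×ˢ Ici u) := by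
      ext ω
      simp only [mem_setOf_eq, mem_preimage, mem_prod, mem_Ioi, mem_Ici, lt_min_iff, le_min_iff]
      constructor
      · rintro (⟨⟨h1, h2⟩, h3⟩ | ⟨⟨h1, h2⟩, h3⟩)
        · exact ⟨h1, h2.le⟩
        · exact ⟨lt_of_le_of_lt h2 (not_le.mp h3), h2⟩
      · rintro ⟨h1, h2⟩
        by_cases h : T ω ≤ C ω
        · exact Or.inl ⟨⟨h1, lt_of_lt_of_le h1 h⟩, h⟩
        · exact Or.inr ⟨⟨h1.le, h2⟩, h⟩
    rw [hset, ← Measure.map_apply hTC (measurableSet_Ioi.prod measurableSet_Ici), ← hνdef,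
      hkey u]
  have hb : ∀ s : Set ℝ, MeasurableSet s →
      Measure.map (fun ω => min (T ω) (C ω)) (P.restrict {ω | ¬ T ω ≤ C ω}) s
        = ∫⁻ u in s, P {ω | u < T ω} ∂μC := by
    intro s hs
    have hΔ : MeasurableSet {ω | ¬ T ω ≤ C ω} := (measurableSet_le hT hC).compl
    rw [Measure.map_apply hX hs, Measure.restrict_apply (hX hs)]
    have hset : (fun ω => min (T ω) (C ω)) ⁻¹' s ∩ {ω | ¬ T ω ≤ C ω}
        = (fun ω => (T ω, C ω)) ⁻¹' {p : ℝ × ℝ | p.2 ∈ s ∧ p.2 < p.1} := by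
      ext ω
      simp only [mem_inter_iff, mem_preimage, mem_setOf_eq]
      constructor
      · rintro ⟨h1, h2⟩
        have hct : C ω < T ω := not_le.mp h2
        rw [min_eq_right hct.le] at h1
        exact ⟨h1, hct⟩
      · rintro ⟨h1, h2⟩
        refine ⟨?_, not_le.mpr h2⟩
        rw [min_eq_right h2.le]
        exact h1
    have hSbm : MeasurableSet {p : ℝ × ℝ | p.2 ∈ s ∧ p.2 < p.1} :=
      (measurable_snd hs).inter hR
    have hsub : {p : ℝ × ℝ | p.2 ∈ s ∧ p.2 < p.1} ⊆ R := fun p hp => hp.2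
    have h1 : ν {p : ℝ × ℝ | p.2 ∈ s ∧ p.2 < p.1}
        = (μT.prod μC) {p : ℝ × ℝ | p.2 ∈ s ∧ p.2 < p.1} := by
      have h2 := hOnR _ hSbm
      rwa [inter_eq_self_of_subset_left hsub] at h2
    have hfun : (fun c : ℝ => μT ((fun t => (t, c)) ⁻¹' {p : ℝ × ℝ | p.2 ∈ s ∧ p.2 < p.1}))
        = s.indicator (fun c => μT (Ioi c)) := by
      funext c
      by_cases hcs : c ∈ s
      · rw [indicator_of_mem hcs]
        congr 1
        ext x
        simp [hcs, mem_Ioi]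
      · rw [indicator_of_notMem hcs]
        have he : ((fun t : ℝ => (t, c)) ⁻¹' {p : ℝ × ℝ | p.2 ∈ s ∧ p.2 < p.1}) = ∅ := by
          ext x
          simp [hcs]
        rw [he, measure_empty]
    rw [hset, ← Measure.map_apply hTC hSbm, ← hνdef, h1, Measure.prod_apply_symm hSbm, hfun,
      lintegral_indicator hs]
    exact lintegral_congr fun u => hmapT u
  refine ⟨?_, ?_, ?_⟩
  · intro u hu
    rw [hEa u, ENNReal.toReal_mul, hmapT u, hmapC u]
  · intro s hs _
    exact hb s hs
  · intro t ht
    have htτ : Ioc (0 : ℝ) t ⊆ Ioc 0 τ := Ioc_subset_Ioc_right ht.2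
    have hFmeas : Measurable fun u : ℝ => μT (Ioi u) := by
      apply Antitone.measurable
      intro a b hab
      exact measure_mono (Ioi_subset_Ioi hab)
    have hGr : (Measure.map (fun ω => min (T ω) (C ω))
          (P.restrict {ω | ¬ T ω ≤ C ω})).restrict (Ioc 0 t)
        = (μC.withDensity fun u => μT (Ioi u)).restrict (Ioc 0 t) := by
      ext s hs
      rw [Measure.restrict_apply hs, Measure.restrict_apply hs,
        hb _ (hs.inter measurableSet_Ioc),
        withDensity_apply _ (hs.inter measurableSet_Ioc)]
      exact lintegral_congr fun u => (hmapT u).symm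
    rw [hGr, restrict_withDensity measurableSet_Ioc]
    have hFcoe : (fun u : ℝ => μT (Ioi u))
        = fun u => (((μT (Ioi u)).toNNReal : NNReal) : ENNReal) :=
      funext fun u => (ENNReal.coe_toNNReal (measure_ne_top μT _)).symm
    rw [hFcoe, integral_withDensity_eq_integral_smul
      (f := fun u : ℝ => (μT (Ioi u)).toNNReal)
      (ENNReal.measurable_toNNReal.comp hFmeas)]
    apply setIntegral_congr_fun measurableSet_Ioc
    intro u hu
    have hu' : u ∈ Ioc (0 : ℝ) τ := htτ hu
    have hTne : P {ω | u < T ω} ≠ 0 := by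
      have hmono : {ω | τ < T ω} ⊆ {ω | u < T ω} := fun ω h => lt_of_le_of_lt hu'.2 h
      exact (lt_of_lt_of_le hTτ (measure_mono hmono)).ne'
    have ha0 : (P {ω | u < T ω}).toReal ≠ 0 :=
      ENNReal.toReal_ne_zero.mpr ⟨hTne, measure_ne_top _ _⟩
    have hcoe : (((μT (Ioi u)).toNNReal : NNReal) : ℝ) = (μT (Ioi u)).toReal := rfl
    simp only [NNReal.smul_def, smul_eq_mul]
    rw [hcoe, hEa u, ENNReal.toReal_mul, hmapT u, hmapC u,
      mul_inv, ← mul_assoc, mul_inv_cancel₀ ha0, one_mul]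
end

section
/- Augmentation terms built from the identified censoring hazard have mean zero: for every bounded measurable h : (0, τ] → ℝ, E[ ∫_(0,τ] h(u) dN_C(u) ] = E[ ∫_(0,τ] h(u) Y†(u) dΛ(u) ]; equivalently, E[ ∫_(0,τ] h(u) dM_C(u) ] = 0 where M_C(t) = N_C(t) − ∫_(0,t] Y†(u) dΛ(u). -/
open MeasureTheory Set

/-- Let `X ∈ (0, τ]` and `Δ ∈ {0,1}` be random variables on a
probability space `(Ω, F, P)`, with `N_C(u) = 1{X ≤ u, Δ = 0}` and the modified
at-risk process `Y†(u) = 1{(X > u ∧ Δ = 1) ∨ (X ≥ u ∧ Δ = 0)}`.  Let `y(u) = E[Y†(u)]`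
with `y ≥ ε > 0` on `(0, τ]`, let `G(u) = P(X ≤ u, Δ = 0)` — whose Lebesgue–Stieltjes
measure is the pushforward of `P` restricted to `{Δ = 0}` under `X` — and let
`Λ(t) = ∫_(0,t] (1/y(u)) dG(u)` be the identified cumulative censoring hazard.
Then augmentation terms built from `Λ` have mean zero: for every bounded measurable
`h : (0, τ] → ℝ`,

`E[∫_(0,τ] h(u) dN_C(u)] = E[∫_(0,τ] h(u) Y†(u) dΛ(u)]`,

i.e. `E[∫_(0,τ] h dM_C] = 0` for `M_C(t) = N_C(t) - ∫_(0,t] Y†(u) dΛ(u)`. -/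
theorem stmt_15
    {Ω : Type*} [MeasurableSpace Ω] (P : Measure Ω) [IsProbabilityMeasure P]
    (τ ε : ℝ) (hτ : 0 < τ) (hε : 0 < ε)
    (X Δ : Ω → ℝ) (hX : Measurable X) (hΔ : Measurable Δ)
    (hXrange : ∀ ω, X ω ∈ Ioc 0 τ) (hΔval : ∀ ω, Δ ω = 0 ∨ Δ ω = 1)
    (y : ℝ → ℝ)
    (hy : ∀ u : ℝ, y u
      = ∫ ω, (if (u < X ω ∧ Δ ω = 1) ∨ (u ≤ X ω ∧ Δ ω = 0) then (1 : ℝ) else 0) ∂P)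
    (hyε : ∀ u ∈ Ioc (0 : ℝ) τ, ε ≤ y u)
    (h : ℝ → ℝ) (hh : Measurable h) (Cb : ℝ) (hhb : ∀ u, |h u| ≤ Cb) :
    ∫ ω, (Ioc (0 : ℝ) τ).indicator
        (fun x => (if Δ ω = 0 then (1 : ℝ) else 0) * h x) (X ω) ∂P
      = ∫ ω, (∫ u in Ioc (0 : ℝ) τ,
          h u * (if (u < X ω ∧ Δ ω = 1) ∨ (u ≤ X ω ∧ Δ ω = 0) then (1 : ℝ) else 0) / y u
          ∂(Measure.map X (P.restrict {ω' | Δ ω' = 0}))) ∂P := by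
  classical
  have hsm : MeasurableSet {ω' | Δ ω' = 0} := hΔ (measurableSet_singleton 0)
  set ν : Measure Ω := P.restrict {ω' | Δ ω' = 0} with hνdef
  set μ : Measure ℝ := ν.map X with hμdef
  haveI : IsFiniteMeasure μ := Measure.isFiniteMeasure_map ν X
  -- measurability of the at-risk set for fixed u
  have hA : ∀ u : ℝ, MeasurableSet {ω | (u < X ω ∧ Δ ω = 1) ∨ (u ≤ X ω ∧ Δ ω = 0)} := by
    intro u
    simp only [setOf_or, setOf_and]
    exact ((measurableSet_lt measurable_const hX).inter (hΔ (measurableSet_singleton 1))).union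
      ((measurableSet_le measurable_const hX).inter (hΔ (measurableSet_singleton 0)))
  have hindInt : ∀ u : ℝ, Integrable
      (fun ω => if (u < X ω ∧ Δ ω = 1) ∨ (u ≤ X ω ∧ Δ ω = 0) then (1 : ℝ) else 0) P := by
    intro u
    have heq : (fun ω => if (u < X ω ∧ Δ ω = 1) ∨ (u ≤ X ω ∧ Δ ω = 0) then (1 : ℝ) else 0)
        = Set.indicator {ω | (u < X ω ∧ Δ ω = 1) ∨ (u ≤ X ω ∧ Δ ω = 0)} (fun _ => (1 : ℝ)) := by
      funext ω; simp [Set.indicator_apply]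
    rw [heq]
    exact (integrable_const 1).indicator (hA u)
  -- y is antitone, hence measurable
  have hyanti : Antitone y := by
    intro u v huv
    rw [hy u, hy v]
    refine integral_mono (hindInt v) (hindInt u) ?_
    intro ω
    dsimp only
    split_ifs with h1 h2
    · exact le_refl 1
    · exfalso; apply h2
      rcases h1 with ⟨hlt, hd⟩ | ⟨hle, hd⟩
      · exact Or.inl ⟨lt_of_le_of_lt huv hlt, hd⟩
      · exact Or.inr ⟨le_trans huv hle, hd⟩
    · norm_num
    · exact le_refl 0
  have hymeas : Measurable y := hyanti.measurable
  -- μ lives on Ioc 0 τ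
  have hμIoc : μ (Ioc (0 : ℝ) τ)ᶜ = 0 := by
    rw [hμdef, Measure.map_apply hX measurableSet_Ioc.compl]
    have hpre : X ⁻¹' (Ioc (0 : ℝ) τ)ᶜ = ∅ := by
      ext ω; simp [hXrange ω]
    simp [hpre]
  have hμres : μ.restrict (Ioc (0 : ℝ) τ) = μ := by
    refine Measure.restrict_eq_self_of_ae_mem ?_
    rw [ae_iff]
    exact hμIoc
  -- the integrand
  set f : Ω → ℝ → ℝ := fun ω u =>
    h u * (if (u < X ω ∧ Δ ω = 1) ∨ (u ≤ X ω ∧ Δ ω = 0) then (1 : ℝ) else 0) / y u with hfdef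
  -- product integrability
  have hFmeas : Measurable (Function.uncurry f) := by
    have h1 : Measurable fun p : Ω × ℝ => h p.2 := hh.comp measurable_snd
    have hS : MeasurableSet {p : Ω × ℝ | (p.2 < X p.1 ∧ Δ p.1 = 1) ∨ (p.2 ≤ X p.1 ∧ Δ p.1 = 0)} := by
      simp only [setOf_or, setOf_and]
      exact ((measurableSet_lt measurable_snd (hX.comp measurable_fst)).inter
          ((hΔ.comp measurable_fst) (measurableSet_singleton 1))).union
        ((measurableSet_le measurable_snd (hX.comp measurable_fst)).inter
          ((hΔ.comp measurable_fst) (measurableSet_singleton 0)))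
    have h2 : Measurable fun p : Ω × ℝ =>
        (if (p.2 < X p.1 ∧ Δ p.1 = 1) ∨ (p.2 ≤ X p.1 ∧ Δ p.1 = 0) then (1 : ℝ) else 0) := by
      have heq2 : (fun p : Ω × ℝ =>
          (if (p.2 < X p.1 ∧ Δ p.1 = 1) ∨ (p.2 ≤ X p.1 ∧ Δ p.1 = 0) then (1 : ℝ) else 0))
          = Set.indicator {p : Ω × ℝ | (p.2 < X p.1 ∧ Δ p.1 = 1) ∨ (p.2 ≤ X p.1 ∧ Δ p.1 = 0)}
            (fun _ => (1 : ℝ)) := by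
        funext p; simp [Set.indicator_apply]
      rw [heq2]
      exact (measurable_const.indicator hS)
    have h3 : Measurable fun p : Ω × ℝ => y p.2 := hymeas.comp measurable_snd
    exact (h1.mul h2).div h3
  have haeIoc : ∀ᵐ p : Ω × ℝ ∂(P.prod (μ.restrict (Ioc (0 : ℝ) τ))), p.2 ∈ Ioc (0 : ℝ) τ := by
    rw [ae_iff]
    have hset : {p : Ω × ℝ | ¬ p.2 ∈ Ioc (0 : ℝ) τ} = univ ×ˢ (Ioc (0 : ℝ) τ)ᶜ := by
      ext p; simp
    rw [hset, Measure.prod_prod, Measure.restrict_apply measurableSet_Ioc.compl]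
    simp
  have hFint : Integrable (Function.uncurry f) (P.prod (μ.restrict (Ioc (0 : ℝ) τ))) := by
    refine ⟨hFmeas.aestronglyMeasurable, ?_⟩
    refine HasFiniteIntegral.of_bounded (C := Cb / ε) ?_
    filter_upwards [haeIoc] with p hp
    have hyp : ε ≤ y p.2 := hyε p.2 hp
    have hypos : 0 < y p.2 := lt_of_lt_of_le hε hyp
    have hCb : 0 ≤ Cb := le_trans (abs_nonneg _) (hhb 0)
    simp only [Function.uncurry, hfdef, Real.norm_eq_abs, abs_div, abs_mul]
    have hind1 : |(if (p.2 < X p.1 ∧ Δ p.1 = 1) ∨ (p.2 ≤ X p.1 ∧ Δ p.1 = 0) then (1 : ℝ) else 0)|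
        ≤ 1 := by split_ifs <;> norm_num
    calc |h p.2| * |(if (p.2 < X p.1 ∧ Δ p.1 = 1) ∨ (p.2 ≤ X p.1 ∧ Δ p.1 = 0) then (1:ℝ) else 0)|
          / |y p.2|
        ≤ Cb * 1 / ε := by
          apply div_le_div₀ (by positivity)
            (mul_le_mul (hhb p.2) hind1 (abs_nonneg _) hCb) hε
          rw [abs_of_pos hypos]; exact hyp
      _ = Cb / ε := by ring
  -- swap the integrals
  have hswap : (∫ ω, ∫ u in Ioc (0 : ℝ) τ, f ω u ∂μ ∂P)
      = ∫ u in Ioc (0 : ℝ) τ, ∫ ω, f ω u ∂P ∂μ :=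
    integral_integral_swap hFint
  -- compute the inner integral after swap
  have hinner : (∫ u in Ioc (0 : ℝ) τ, ∫ ω, f ω u ∂P ∂μ)
      = ∫ u in Ioc (0 : ℝ) τ, h u ∂μ := by
    refine integral_congr_ae ?_
    have hmem : ∀ᵐ u ∂(μ.restrict (Ioc (0 : ℝ) τ)), u ∈ Ioc (0 : ℝ) τ :=
      ae_restrict_mem measurableSet_Ioc
    filter_upwards [hmem] with u hu
    have hyu : ε ≤ y u := hyε u hu
    have hyne : y u ≠ 0 := ne_of_gt (lt_of_lt_of_le hε hyu)
    have heq : (fun ω => f ω u) = fun ω =>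
        (h u / y u) * (if (u < X ω ∧ Δ ω = 1) ∨ (u ≤ X ω ∧ Δ ω = 0) then (1 : ℝ) else 0) := by
      funext ω; simp only [hfdef]; ring
    rw [heq, integral_const_mul, ← hy u]
    field_simp
  -- identify ∫ h dμ with the left-hand side
  have hmap : (∫ u, h u ∂μ) = ∫ ω, h (X ω) ∂ν :=
    integral_map hX.aemeasurable hh.aestronglyMeasurable
  have hLHS : (∫ ω, (Ioc (0 : ℝ) τ).indicator
        (fun x => (if Δ ω = 0 then (1 : ℝ) else 0) * h x) (X ω) ∂P)
      = ∫ ω, h (X ω) ∂ν := by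
    rw [hνdef, ← integral_indicator hsm]
    refine integral_congr_ae (Filter.Eventually.of_forall fun ω => ?_)
    by_cases hd : Δ ω = 0 <;>
      simp [Set.indicator_apply, hd, hXrange ω]
  calc (∫ ω, (Ioc (0 : ℝ) τ).indicator
        (fun x => (if Δ ω = 0 then (1 : ℝ) else 0) * h x) (X ω) ∂P)
      = ∫ ω, h (X ω) ∂ν := hLHS
    _ = ∫ u, h u ∂μ := hmap.symm
    _ = ∫ u in Ioc (0 : ℝ) τ, h u ∂μ := by rw [hμres]
    _ = ∫ u in Ioc (0 : ℝ) τ, ∫ ω, f ω u ∂P ∂μ := hinner.symm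
    _ = ∫ ω, ∫ u in Ioc (0 : ℝ) τ, f ω u ∂μ ∂P := hswap.symm
    _ = _ := by rfl
end

section
/- The inverse-propensity-weighted expectation recovers the unweighted expectation: E[ (1{A = a}/π) · W ] = E[W]. -/
open MeasureTheory Set

/-- Let `(Ω, F, P)` be a probability space, `G` and `H` sub-σ-algebras
of `F` (`G` generated by the baseline covariates), and `A : Ω → {0,1}` a random
variable such that `σ(A)` and `H` are conditionally independent given `G` (expressed
elementarily: conditional expectations of products of indicators of `σ(A)`- and
`H`-measurable sets factor, given `G`).  Fix `a ∈ {0,1}`.  Let `W` be `H`-measurable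
and integrable, and let `π` be a `G`-measurable version of `P(A = a | G)` with
`π ≥ ε > 0` a.s.  Then the inverse-propensity-weighted expectation recovers the
unweighted expectation:

`E[(1{A = a}/π)·W] = E[W]`. -/
theorem stmt_16
    {Ω : Type*} (G H : MeasurableSpace Ω) [mΩ : MeasurableSpace Ω] (P : Measure Ω) [IsProbabilityMeasure P]
    (hG : G ≤ mΩ) (hH : H ≤ mΩ)
    (A : Ω → ℝ) (hA : Measurable A) (a ε : ℝ)
    (hAval : ∀ ω, A ω = 0 ∨ A ω = 1) (ha : a = 0 ∨ a = 1) (hε : 0 < ε)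
    -- `σ(A)` and `H` are conditionally independent given `G`
    (hCI : ∀ s t : Set Ω,
      MeasurableSet[MeasurableSpace.comap A inferInstance] s → MeasurableSet[H] t →
      P[(fun ω => s.indicator (fun _ => (1 : ℝ)) ω * t.indicator (fun _ => (1 : ℝ)) ω) | G]
        =ᵐ[P] fun ω => (P[s.indicator (fun _ => (1 : ℝ)) | G]) ω
          * (P[t.indicator (fun _ => (1 : ℝ)) | G]) ω)
    (W : Ω → ℝ) (hW : Integrable W P) (hWmeas : StronglyMeasurable[H] W)
    (π : Ω → ℝ) (hπmeas : StronglyMeasurable[G] π)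
    -- `π` is a `G`-measurable version of `P(A = a | G)`
    (hπ : π =ᵐ[P] P[(fun ω => if A ω = a then (1 : ℝ) else 0) | G])
    (hπε : ∀ᵐ ω ∂P, ε ≤ π ω) :
    ∫ ω, (if A ω = a then (1 : ℝ) else 0) / π ω * W ω ∂P = ∫ ω, W ω ∂P := by
  classical
  letI : MeasurableSpace Ω := mΩ
  set s : Set Ω := A ⁻¹' {a} with hs_def
  have hind_eq : (fun ω => if A ω = a then (1:ℝ) else 0) = s.indicator (fun _ => (1:ℝ)) := by
    funext ω
    by_cases h : A ω = a <;> simp [hs_def, Set.indicator_apply, h]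
  have hs_comap : MeasurableSet[MeasurableSpace.comap A inferInstance] s :=
    ⟨{a}, measurableSet_singleton a, rfl⟩
  have hsH : MeasurableSet[mΩ] s := hA (measurableSet_singleton a)
  have hs' : MeasurableSet[mΩ] s := hsH
  have hπ' : π =ᵐ[P] P[s.indicator (fun _ => (1:ℝ)) | G] := by
    rw [← hind_eq]; exact hπ
  have hπmeas' : Measurable[mΩ] π := (hπmeas.mono hG).measurable
  set g : Ω → ℝ := fun ω => (if A ω = a then (1:ℝ) else 0) / π ω with hg_def
  have hg_meas : Measurable[mΩ] g := by
    have h0 : Measurable[mΩ] (fun ω => if A ω = a then (1:ℝ) else 0) := by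
      rw [hind_eq]
      exact measurable_const.indicator hs'
    exact h0.div hπmeas'
  have hg_abs : ∀ᵐ ω ∂P, |g ω| ≤ ε⁻¹ := by
    filter_upwards [hπε] with ω hω
    have hπpos : 0 < π ω := lt_of_lt_of_le hε hω
    by_cases h : A ω = a
    · have hgω : g ω = 1 / π ω := by rw [hg_def]; simp [h]
      rw [hgω, abs_div, abs_one, abs_of_pos hπpos, one_div]
      exact inv_anti₀ hε hω
    · have hgω : g ω = 0 := by rw [hg_def]; simp [h]
      rw [hgω, abs_zero]
      positivity
  have hgf_int : ∀ f : Ω → ℝ, Integrable f P → Integrable (fun ω => g ω * f ω) P := by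
    intro f hf
    have hm : AEStronglyMeasurable (fun ω => g ω * f ω) P :=
      hg_meas.aestronglyMeasurable.mul hf.1
    refine Integrable.mono' (hf.abs.const_mul ε⁻¹) hm ?_
    filter_upwards [hg_abs] with ω hω
    rw [Real.norm_eq_abs, abs_mul]
    exact mul_le_mul_of_nonneg_right hω (abs_nonneg _)
  have hcf_int : ∀ f : Ω → ℝ, Integrable f P → Integrable (fun ω => (π ω)⁻¹ * f ω) P := by
    intro f hf
    have hm : AEStronglyMeasurable (fun ω => (π ω)⁻¹ * f ω) P :=
      hπmeas'.inv.aestronglyMeasurable.mul hf.1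
    refine Integrable.mono' (hf.abs.const_mul ε⁻¹) hm ?_
    filter_upwards [hπε] with ω hω
    have hπpos : 0 < π ω := lt_of_lt_of_le hε hω
    rw [Real.norm_eq_abs, abs_mul, abs_inv, abs_of_pos hπpos]
    exact mul_le_mul_of_nonneg_right (inv_anti₀ hε hω) (abs_nonneg _)
  have hc_meas : StronglyMeasurable[G] (fun ω => (π ω)⁻¹) :=
    (hπmeas.measurable.inv).stronglyMeasurable
  -- key lemma: the identity for indicators of `H`-measurable sets
  have key : ∀ t : Set Ω, MeasurableSet[H] t →
      ∫ ω, g ω * t.indicator (fun _ => (1:ℝ)) ω ∂P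
        = ∫ ω, t.indicator (fun _ => (1:ℝ)) ω ∂P := by
    intro t ht
    have ht' : MeasurableSet[mΩ] t := hH t ht
    set F : Ω → ℝ := fun ω => s.indicator (fun _ => (1:ℝ)) ω * t.indicator (fun _ => (1:ℝ)) ω
      with hF_def
    have hF_eq : F = (s ∩ t).indicator (fun _ => (1:ℝ)) := by
      funext ω
      by_cases h1 : ω ∈ s <;> by_cases h2 : ω ∈ t <;>
        simp [hF_def, Set.indicator_apply, h1, h2, Set.mem_inter_iff]
    have hF_int : Integrable F P := by
      rw [hF_eq]
      exact (integrable_const (1:ℝ)).indicator (hs'.inter ht')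
    have ht_int : Integrable (t.indicator (fun _ => (1:ℝ))) P :=
      (integrable_const (1:ℝ)).indicator ht'
    have hstep1 : ∫ ω, g ω * t.indicator (fun _ => (1:ℝ)) ω ∂P
        = ∫ ω, (π ω)⁻¹ * F ω ∂P := by
      refine integral_congr_ae (Filter.Eventually.of_forall fun ω => ?_)
      rw [hg_def]
      have hce := congrFun hind_eq ω
      simp only [hF_def]
      rw [hce]
      ring
    have hcF_int : Integrable ((fun ω => (π ω)⁻¹) * F) P := by
      have := hcf_int F hF_int
      exact this
    have hpull := condExp_mul_of_stronglyMeasurable_left (μ := P) (m := G) hc_meas hcF_int hF_int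
    have hstep2 : ∫ ω, (π ω)⁻¹ * F ω ∂P = ∫ ω, (π ω)⁻¹ * (P[F | G]) ω ∂P := by
      have h1 : ∫ ω, (π ω)⁻¹ * F ω ∂P = ∫ ω, ((fun ω => (π ω)⁻¹) * F) ω ∂P := rfl
      rw [h1, ← integral_condExp hG (f := (fun ω => (π ω)⁻¹) * F)]
      exact integral_congr_ae hpull
    have hCIst := hCI s t hs_comap ht
    have hstep3 : ∫ ω, (π ω)⁻¹ * (P[F | G]) ω ∂P
        = ∫ ω, (P[t.indicator (fun _ => (1:ℝ)) | G]) ω ∂P := by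
      refine integral_congr_ae ?_
      filter_upwards [hCIst, hπ', hπε] with ω h1 h2 h3
      have hπpos : 0 < π ω := lt_of_lt_of_le hε h3
      have h4 : (P[F | G]) ω = (P[s.indicator (fun _ => (1:ℝ)) | G]) ω
          * (P[t.indicator (fun _ => (1:ℝ)) | G]) ω := h1
      rw [h4, ← h2, ← mul_assoc, inv_mul_cancel₀ (ne_of_gt hπpos), one_mul]
    rw [hstep1, hstep2, hstep3, integral_condExp hG]
  -- main induction over integrable `H`-measurable functions
  have main : ∀ ⦃f : Ω → ℝ⦄, Integrable f (P.trim hH) →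
      ∫ ω, g ω * f ω ∂P = ∫ ω, f ω ∂P := by
    refine @Integrable.induction Ω ℝ H _ (P.trim hH)
      (fun f => ∫ ω, g ω * f ω ∂P = ∫ ω, f ω ∂P) ?_ ?_ ?_ ?_
    · intro c t ht htμ
      have hteq : t.indicator (fun _ => c) = fun ω => c * t.indicator (fun _ => (1:ℝ)) ω := by
        funext ω; by_cases h : ω ∈ t <;> simp [h]
      rw [hteq]
      have h1 : ∫ ω, g ω * (c * t.indicator (fun _ => (1:ℝ)) ω) ∂P
          = c * ∫ ω, g ω * t.indicator (fun _ => (1:ℝ)) ω ∂P := by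
        rw [← integral_const_mul]
        refine integral_congr_ae (Filter.Eventually.of_forall fun ω => ?_)
        ring
      rw [h1, key t ht, integral_const_mul]
    · intro f1 f2 _ hf1 hf2 h1 h2
      have hf1' := integrable_of_integrable_trim hH hf1
      have hf2' := integrable_of_integrable_trim hH hf2
      have he : (fun ω => g ω * (f1 + f2) ω) = fun ω => g ω * f1 ω + g ω * f2 ω := by
        funext ω; simp only [Pi.add_apply]; ring
      rw [he, integral_add (hgf_int _ hf1') (hgf_int _ hf2'), h1, h2]
      rw [← integral_add hf1' hf2']
      rfl
    · -- closedness in L¹ of the trimmed measure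
      have hΨ : Continuous fun f : Lp ℝ 1 (P.trim hH) => ∫ ω, f ω ∂P := by
        have he : (fun f : Lp ℝ 1 (P.trim hH) => ∫ ω, f ω ∂P)
            = fun f : Lp ℝ 1 (P.trim hH) => ∫ ω, f ω ∂(P.trim hH) := by
          funext f
          exact integral_trim_ae hH (Lp.aestronglyMeasurable f)
        rw [he]
        exact continuous_integral
      have hΦ : Continuous fun f : Lp ℝ 1 (P.trim hH) => ∫ ω, g ω * f ω ∂P := by
        refine LipschitzWith.continuous (K := ⟨ε⁻¹, by positivity⟩)
          (LipschitzWith.of_dist_le_mul ?_)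
        intro f1 f2
        have hf1' : Integrable (⇑f1) P := integrable_of_integrable_trim hH (L1.integrable_coeFn f1)
        have hf2' : Integrable (⇑f2) P := integrable_of_integrable_trim hH (L1.integrable_coeFn f2)
        have hsub : Integrable (fun ω => f1 ω - f2 ω) P := hf1'.sub hf2'
        have e1 : ∫ ω, g ω * f1 ω ∂P - ∫ ω, g ω * f2 ω ∂P
            = ∫ ω, g ω * (f1 ω - f2 ω) ∂P := by
          rw [← integral_sub (hgf_int _ hf1') (hgf_int _ hf2')]
          refine integral_congr_ae (Filter.Eventually.of_forall fun ω => ?_)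
          ring
        have e2 : |∫ ω, g ω * (f1 ω - f2 ω) ∂P| ≤ ε⁻¹ * ∫ ω, |f1 ω - f2 ω| ∂P := by
          have hn := norm_integral_le_integral_norm (μ := P) (fun ω => g ω * (f1 ω - f2 ω))
          calc |∫ ω, g ω * (f1 ω - f2 ω) ∂P|
              = ‖∫ ω, g ω * (f1 ω - f2 ω) ∂P‖ := (Real.norm_eq_abs _).symm
            _ ≤ ∫ ω, ‖g ω * (f1 ω - f2 ω)‖ ∂P := hn
            _ ≤ ∫ ω, ε⁻¹ * |f1 ω - f2 ω| ∂P := by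
                have hint1 : Integrable (fun ω => ‖g ω * (f1 ω - f2 ω)‖) P := (hgf_int _ hsub).norm
                refine integral_mono_ae hint1 (hsub.abs.const_mul ε⁻¹) ?_
                filter_upwards [hg_abs] with ω hω
                rw [Real.norm_eq_abs, abs_mul]
                exact mul_le_mul_of_nonneg_right hω (abs_nonneg _)
            _ = ε⁻¹ * ∫ ω, |f1 ω - f2 ω| ∂P := integral_const_mul _ _
        have e3 : ∫ ω, |f1 ω - f2 ω| ∂P = dist f1 f2 := by
          rw [L1.dist_eq_integral_dist]
          have hm : AEStronglyMeasurable[H] (fun ω => |f1 ω - f2 ω|) (P.trim hH) :=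
            ((Lp.aestronglyMeasurable f1).sub (Lp.aestronglyMeasurable f2)).norm
          rw [integral_trim_ae hH hm]
          refine integral_congr_ae (Filter.Eventually.of_forall fun ω => ?_)
          simp [Real.dist_eq]
        show dist (∫ ω, g ω * f1 ω ∂P) (∫ ω, g ω * f2 ω ∂P) ≤ ε⁻¹ * dist f1 f2
        rw [Real.dist_eq, e1, ← e3]
        exact e2
      exact isClosed_eq hΦ hΨ
    · intro f1 f2 heq hf1 h1
      have heqP : f1 =ᵐ[P] f2 := ae_eq_of_ae_eq_trim heq
      have e1 : ∫ ω, g ω * f2 ω ∂P = ∫ ω, g ω * f1 ω ∂P := by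
        refine integral_congr_ae ?_
        filter_upwards [heqP] with ω h
        rw [h]
      rw [e1, h1]
      exact integral_congr_ae heqP
  have hWtrim : Integrable W (P.trim hH) := hW.trim hH hWmeas
  exact main hWtrim
end
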